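/- For all real numbers u and v, Λ(u) − Λ(v) ≤ 3Λ(π/3), and moreover 3Λ(π/3) < 4Λ(π/4); consequently Λ(u) − Λ(v) < 4Λ(π/4) for all real u, v. (Geometrically: half the volume of the figure-eight knot complement, 3Λ(π/3), is strictly smaller than half the volume of the Whitehead link complement, 4Λ(π/4).) -/

import Mathlib

/-!
`Λ` is odd, and `π`-periodic because `∫₀^π log|2 sin t| dt = 0`; the duplication formula
`Λ(2x) = 2Λ(x) + 2Λ(x + π/2)` then gives `3Λ(π/3) = 2Λ(π/6)`. The integrand is nonnegative
exactly where `|sin t| ≥ 1/2`, so `Λ` is maximal at `π/6` and, being odd, `-Λ(π/6) ≤ Λ`;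
hence `Λ(u) - Λ(v) ≤ 2Λ(π/6) = 3Λ(π/3)`. For the strict inequality, `log|2 sin t| ≤ log 2`
gives `Λ(π/4) ≥ Λ(π/6) - (π/12) log 2` and `sin t ≤ t` gives `Λ(π/6) ≥ (π/6)(1 - log(π/3))`,
which reduces the claim to `2π/3 < e`.
-/

open Real

/-- The Lobachevsky function `Λ(θ) = -∫₀^θ log|2 sin t| dt`. -/
noncomputable def Lob (θ : ℝ) : ℝ :=
  -∫ t in (0:ℝ)..θ, Real.log |2 * Real.sin t|

open MeasureTheory intervalIntegral Set

noncomputable def lobIntegrand (t : ℝ) : ℝ := log |2 * sin t|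

lemma Lob_eq_neg_integral (θ : ℝ) : Lob θ = -∫ t in (0:ℝ)..θ, lobIntegrand t := rfl

lemma intervalIntegrable_lobIntegrand (a b : ℝ) :
    IntervalIntegrable lobIntegrand volume a b :=
  ((analyticOnNhd_const.mul analyticOnNhd_sin).meromorphicOn
    (U := uIcc a b)).intervalIntegrable_log_norm

lemma lobIntegrand_periodic : Function.Periodic lobIntegrand π := fun t => by
  simp [lobIntegrand, sin_add_pi]

lemma lobIntegrand_neg (t : ℝ) : lobIntegrand (-t) = lobIntegrand t := by
  simp [lobIntegrand]

lemma lobIntegrand_two_mul {t : ℝ} (hsin : sin t ≠ 0) (hcos : cos t ≠ 0) :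
    lobIntegrand (2 * t) = lobIntegrand t + lobIntegrand (t + π / 2) := by
  rw [lobIntegrand, lobIntegrand, lobIntegrand, sin_add_pi_div_two, ← log_mul (by simpa)
    (by simpa), ← abs_mul, sin_two_mul]
  ring_nf

lemma integral_lobIntegrand_eq_Lob_sub (a b : ℝ) :
    ∫ t in a..b, lobIntegrand t = Lob a - Lob b := by
  rw [Lob_eq_neg_integral, Lob_eq_neg_integral, ← integral_add_adjacent_intervals
    (intervalIntegrable_lobIntegrand 0 a) (intervalIntegrable_lobIntegrand a b)]
  ring

lemma Lob_neg (θ : ℝ) : Lob (-θ) = -Lob θ := by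
  have h := integral_comp_neg (a := 0) (b := θ) lobIntegrand
  simp only [lobIntegrand_neg, neg_zero] at h
  rw [Lob_eq_neg_integral, Lob_eq_neg_integral, h, integral_symm]

lemma Lob_add_pi (θ : ℝ) : Lob (θ + π) = Lob θ + Lob π := by
  have h := lobIntegrand_periodic.intervalIntegral_add_eq θ 0
  rw [zero_add, integral_lobIntegrand_eq_Lob_sub, integral_lobIntegrand_eq_Lob_sub,
    Lob_eq_neg_integral 0, integral_same] at h
  linarith

lemma Lob_pi_div_two : Lob (π / 2) = 0 := by
  have h : ∫ t in (0:ℝ)..π / 2, lobIntegrand t = ∫ t in (0:ℝ)..π / 2, (log 2 + log (sin t)) := by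
    refine integral_congr_ae (Filter.Eventually.of_forall fun t ht => ?_)
    rw [uIoc_of_le (by positivity)] at ht
    have hsin : 0 < sin t := sin_pos_of_pos_of_lt_pi ht.1 (by linarith [ht.2, pi_pos])
    rw [lobIntegrand, abs_of_pos (by positivity), log_mul two_ne_zero hsin.ne']
  rw [Lob_eq_neg_integral, h, integral_add (g := fun t => log (sin t)) intervalIntegrable_const
    intervalIntegrable_log_sin, integral_log_sin_zero_pi_div_two,
    intervalIntegral.integral_const, smul_eq_mul]
  ring

lemma Lob_pi : Lob π = 0 := by
  have h := Lob_add_pi (-(π / 2))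
  rw [Lob_neg, show -(π / 2) + π = π / 2 by ring, Lob_pi_div_two] at h
  linarith

lemma Lob_periodic : Function.Periodic Lob π := fun θ => by
  rw [Lob_add_pi, Lob_pi, add_zero]

lemma Lob_two_mul {x : ℝ} (hx0 : 0 ≤ x) (hx : x < π / 2) :
    Lob (2 * x) = 2 * Lob x + 2 * Lob (x + π / 2) := by
  have hdup : ∫ t in (0:ℝ)..x, lobIntegrand (2 * t)
      = ∫ t in (0:ℝ)..x, (lobIntegrand t + lobIntegrand (t + π / 2)) := by
    refine integral_congr_ae (Filter.Eventually.of_forall fun t ht => ?_)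
    rw [uIoc_of_le hx0] at ht
    exact lobIntegrand_two_mul (sin_pos_of_pos_of_lt_pi ht.1 (by linarith [ht.2])).ne'
      (cos_pos_of_mem_Ioo ⟨by linarith [ht.1], by linarith [ht.2]⟩).ne'
  rw [integral_comp_mul_left lobIntegrand two_ne_zero, integral_add
    (intervalIntegrable_lobIntegrand _ _)
    (by simpa only [add_sub_cancel_right] using
      (intervalIntegrable_lobIntegrand (0 + π / 2) (x + π / 2)).comp_add_right (π / 2)),
    integral_comp_add_right lobIntegrand, mul_zero, zero_add, smul_eq_mul,
    integral_lobIntegrand_eq_Lob_sub, integral_lobIntegrand_eq_Lob_sub,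
    integral_lobIntegrand_eq_Lob_sub, Lob_pi_div_two] at hdup
  rw [Lob_eq_neg_integral 0, integral_same] at hdup
  linarith

lemma three_mul_Lob_pi_div_three : 3 * Lob (π / 3) = 2 * Lob (π / 6) := by
  have h := Lob_two_mul (x := π / 6) (by positivity) (by linarith [pi_pos])
  have h' := Lob_periodic (-(π / 3))
  rw [Lob_neg, show -(π / 3) + π = π / 6 + π / 2 by ring] at h'
  rw [show 2 * (π / 6) = π / 3 by ring, h'] at h
  linarith

lemma lobIntegrand_nonpos {t : ℝ} (ht : |t| ≤ π / 6) : lobIntegrand t ≤ 0 := by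
  obtain ⟨hlo, hhi⟩ := abs_le.1 ht
  have hπ := pi_pos
  have h1 : sin t ≤ 1 / 2 := by
    simpa using sin_le_sin_of_le_of_le_pi_div_two (by linarith) (by linarith) hhi
  have h2 : -(1 / 2) ≤ sin t := by
    simpa using sin_le_sin_of_le_of_le_pi_div_two (by linarith) (by linarith) hlo
  exact log_nonpos (abs_nonneg _) (abs_le.2 ⟨by linarith, by linarith⟩)

lemma lobIntegrand_nonneg {t : ℝ} (h1 : π / 6 ≤ t) (h2 : t ≤ 5 * π / 6) :
    0 ≤ lobIntegrand t := by
  have hπ := pi_pos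
  have hsin : 1 / 2 ≤ sin t := by
    rcases le_total t (π / 2) with h | h
    · simpa using sin_le_sin_of_le_of_le_pi_div_two (by linarith) h h1
    · rw [← sin_pi_sub]
      simpa using sin_le_sin_of_le_of_le_pi_div_two (by linarith) (by linarith)
        (show π / 6 ≤ π - t by linarith)
  exact log_nonneg (by rw [abs_of_pos (by linarith)]; linarith)

lemma Lob_le_Lob_of_lobIntegrand_nonpos {a b : ℝ} (hab : a ≤ b)
    (h : ∀ t ∈ Icc a b, lobIntegrand t ≤ 0) : Lob a ≤ Lob b := by
  have := integral_mono_on hab (intervalIntegrable_lobIntegrand a b) intervalIntegrable_const h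
  rw [integral_lobIntegrand_eq_Lob_sub, intervalIntegral.integral_zero] at this
  linarith

lemma Lob_le_Lob_of_lobIntegrand_nonneg {a b : ℝ} (hab : a ≤ b)
    (h : ∀ t ∈ Icc a b, 0 ≤ lobIntegrand t) : Lob b ≤ Lob a := by
  have := integral_nonneg (μ := volume) hab h
  rw [integral_lobIntegrand_eq_Lob_sub] at this
  linarith

-- On the period `[π/6, 7π/6]`, `Λ` decreases up to `5π/6` and then increases back.
lemma Lob_le_Lob_pi_div_six (x : ℝ) : Lob x ≤ Lob (π / 6) := by
  have hπ := pi_pos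
  obtain ⟨y, ⟨hy1, hy2⟩, hxy⟩ := Lob_periodic.exists_mem_Ico hπ x (π / 6)
  rw [hxy]
  rcases le_total y (5 * π / 6) with h | h
  · exact Lob_le_Lob_of_lobIntegrand_nonneg hy1 fun t ht =>
      lobIntegrand_nonneg ht.1 (ht.2.trans h)
  · rw [← Lob_periodic (π / 6)]
    refine Lob_le_Lob_of_lobIntegrand_nonpos hy2.le fun t ht => ?_
    rw [← lobIntegrand_periodic.sub_eq]
    exact lobIntegrand_nonpos (abs_le.2 ⟨by linarith [ht.1], by linarith [ht.2]⟩)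

lemma neg_Lob_pi_div_six_le_Lob (x : ℝ) : -Lob (π / 6) ≤ Lob x := by
  linarith [Lob_le_Lob_pi_div_six (-x), Lob_neg x]

lemma lobIntegrand_le_log_two (t : ℝ) : lobIntegrand t ≤ log 2 := by
  rcases eq_or_ne (sin t) 0 with h | h
  · simp [lobIntegrand, h, log_nonneg]
  · refine log_le_log (by positivity) ?_
    rw [abs_mul, abs_two]
    linarith [abs_sin_le_one t]

lemma Lob_sub_Lob_le {a b : ℝ} (hab : a ≤ b) : Lob a - Lob b ≤ (b - a) * log 2 := by
  rw [← integral_lobIntegrand_eq_Lob_sub, ← smul_eq_mul, ← intervalIntegral.integral_const]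
  exact integral_mono_on hab (intervalIntegrable_lobIntegrand a b) intervalIntegrable_const
    fun t _ => lobIntegrand_le_log_two t

lemma lobIntegrand_le_log_two_mul {t : ℝ} (h0 : 0 < t) (hπ : t < π) :
    lobIntegrand t ≤ log (2 * t) := by
  have hsin : 0 < sin t := sin_pos_of_pos_of_lt_pi h0 hπ
  rw [lobIntegrand, abs_of_pos (by positivity)]
  exact log_le_log (by positivity) (by linarith [sin_le h0.le])

lemma mul_one_sub_log_le_Lob {x : ℝ} (h0 : 0 ≤ x) (hπ : x ≤ π) :
    x * (1 - log (2 * x)) ≤ Lob x := by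
  have hlog : ∫ t in (0:ℝ)..x, log (2 * t) = x * log (2 * x) - x := by
    rw [integral_comp_mul_left log two_ne_zero, integral_log, smul_eq_mul]
    simp only [mul_zero, log_zero]
    ring
  have hle : ∫ t in (0:ℝ)..x, lobIntegrand t ≤ ∫ t in (0:ℝ)..x, log (2 * t) :=
    integral_mono_on_of_le_Ioo h0 (intervalIntegrable_lobIntegrand 0 x)
      (by simpa using
        (intervalIntegrable_log' (a := 2 * 0) (b := 2 * x)).comp_mul_left (c := 2))
      fun t ht => lobIntegrand_le_log_two_mul ht.1 (ht.2.trans_le hπ)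
  rw [Lob_eq_neg_integral]
  linarith

lemma three_mul_Lob_pi_div_three_lt : 3 * Lob (π / 3) < 4 * Lob (π / 4) := by
  have hπ := pi_pos
  have hlower := mul_one_sub_log_le_Lob (x := π / 6) (by positivity) (by linarith)
  have hlip := Lob_sub_Lob_le (a := π / 6) (b := π / 4) (by linarith)
  have hnum : log 2 + log (2 * (π / 6)) < 1 := by
    rw [← log_mul two_ne_zero (by positivity), log_lt_iff_lt_exp (by positivity)]
    linarith [pi_lt_d2, exp_one_gt_d9]
  have := mul_lt_mul_of_pos_left hnum (by positivity : 0 < π / 3)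
  rw [three_mul_Lob_pi_div_three]
  linarith

theorem stmt_18 :
    (∀ u v : ℝ, Lob u - Lob v ≤ 3 * Lob (π/3)) ∧
    3 * Lob (π/3) < 4 * Lob (π/4) ∧
    (∀ u v : ℝ, Lob u - Lob v < 4 * Lob (π/4)) := by
  have hbound (u v : ℝ) : Lob u - Lob v ≤ 3 * Lob (π/3) := by
    rw [three_mul_Lob_pi_div_three]
    linarith [Lob_le_Lob_pi_div_six u, neg_Lob_pi_div_six_le_Lob v]
  exact ⟨hbound, three_mul_Lob_pi_div_three_lt,
    fun u v => (hbound u v).trans_lt three_mul_Lob_pi_div_three_lt⟩
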